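/- (Sun's theorem) If X is a Hausdorff space, then |X| ≤ πχ(X)^(c(X)·ψ_c(X)). -/

import Mathlib

open Cardinal Set TopologicalSpace

universe u

/-- The density of a space: the least cardinality of a dense subset. -/
noncomputable def dens (X : Type u) [TopologicalSpace X] : Cardinal.{u} :=
  sInf {c : Cardinal.{u} | ∃ D : Set X, Dense D ∧ #D = c}

/-- A local π-base at a point: a family of nonempty open sets such that every
open set containing the point contains a member of the family. -/
def IsLocalPiBase (X : Type u) [TopologicalSpace X] (x : X) (𝒱 : Set (Set X)) : Prop :=
  (∀ V ∈ 𝒱, IsOpen V ∧ V.Nonempty) ∧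
    ∀ U : Set X, IsOpen U → x ∈ U → ∃ V ∈ 𝒱, V ⊆ U

/-- The π-character at a point: the least infinite cardinality of a local π-base. -/
noncomputable def piCharPoint (X : Type u) [TopologicalSpace X] (x : X) : Cardinal.{u} :=
  sInf {κ : Cardinal.{u} | ℵ₀ ≤ κ ∧ ∃ 𝒱 : Set (Set X), IsLocalPiBase X x 𝒱 ∧ #𝒱 ≤ κ}

/-- The π-character of a space. -/
noncomputable def piChar (X : Type u) [TopologicalSpace X] : Cardinal.{u} :=
  ⨆ x : X, piCharPoint X x

/-- A π-base for a space. -/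
def IsPiBase (X : Type u) [TopologicalSpace X] (𝒱 : Set (Set X)) : Prop :=
  (∀ V ∈ 𝒱, IsOpen V ∧ V.Nonempty) ∧
    ∀ U : Set X, IsOpen U → U.Nonempty → ∃ V ∈ 𝒱, V ⊆ U

/-- The π-weight of a space: the least infinite cardinality of a π-base. -/
noncomputable def piWeight (X : Type u) [TopologicalSpace X] : Cardinal.{u} :=
  sInf {κ : Cardinal.{u} | ℵ₀ ≤ κ ∧ ∃ 𝒱 : Set (Set X), IsPiBase X 𝒱 ∧ #𝒱 ≤ κ}

/-- The cellularity of a space: the least infinite cardinal bounding the size of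
every pairwise disjoint family of nonempty open sets. -/
noncomputable def cellularity (X : Type u) [TopologicalSpace X] : Cardinal.{u} :=
  sInf {κ : Cardinal.{u} | ℵ₀ ≤ κ ∧ ∀ 𝒞 : Set (Set X),
    (∀ U ∈ 𝒞, IsOpen U ∧ U.Nonempty) → 𝒞.PairwiseDisjoint id → #𝒞 ≤ κ}

/-- The set of infinite cardinals κ witnessing the nonquasiregularity degree:
every nonempty open set U contains a nonempty set ⋂₀ 𝒱 with 𝒱 an open family of
size at most κ and ⋂_{V ∈ 𝒱} cl V ⊆ U. -/
def nqSet (X : Type u) [TopologicalSpace X] : Set Cardinal.{u} :=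
  {κ : Cardinal.{u} | ℵ₀ ≤ κ ∧ ∀ U : Set X, IsOpen U → U.Nonempty →
    ∃ 𝒱 : Set (Set X), (∀ V ∈ 𝒱, IsOpen V) ∧ #𝒱 ≤ κ ∧
      (⋂₀ 𝒱).Nonempty ∧ (⋂ V ∈ 𝒱, closure V) ⊆ U}

/-- A space is an nq-space if its nonquasiregularity degree is defined. -/
def IsNqSpace (X : Type u) [TopologicalSpace X] : Prop :=
  (nqSet X).Nonempty

/-- The nonquasiregularity degree of a space. -/
noncomputable def nq (X : Type u) [TopologicalSpace X] : Cardinal.{u} :=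
  sInf (nqSet X)

/-- The closed pseudocharacter at a point. -/
noncomputable def psiCPoint (X : Type u) [TopologicalSpace X] (x : X) : Cardinal.{u} :=
  sInf {κ : Cardinal.{u} | ℵ₀ ≤ κ ∧ ∃ 𝒱 : Set (Set X),
    (∀ V ∈ 𝒱, IsOpen V ∧ x ∈ V) ∧ #𝒱 ≤ κ ∧ (⋂ V ∈ 𝒱, closure V) = {x}}

/-- The closed pseudocharacter of a space. -/
noncomputable def psiC (X : Type u) [TopologicalSpace X] : Cardinal.{u} :=
  sInf {κ : Cardinal.{u} | ℵ₀ ≤ κ ∧ ∀ x : X, ∃ 𝒱 : Set (Set X),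
    (∀ V ∈ 𝒱, IsOpen V ∧ x ∈ V) ∧ #𝒱 ≤ κ ∧ (⋂ V ∈ 𝒱, closure V) = {x}}

/-- The dense closed pseudocharacter of a space. -/
noncomputable def dPsiC (X : Type u) [TopologicalSpace X] : Cardinal.{u} :=
  sInf {κ : Cardinal.{u} | ℵ₀ ≤ κ ∧ ∃ D : Set X, Dense D ∧ ∀ d ∈ D, psiCPoint X d ≤ κ}

/-- The weak closed pseudocharacter at a point: the least infinite cardinality of a
family 𝒱 of open sets with ⋂_{V ∈ 𝒱} cl V = {x}. -/
noncomputable def wPsiCPoint (X : Type u) [TopologicalSpace X] (x : X) : Cardinal.{u} :=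
  sInf {κ : Cardinal.{u} | ℵ₀ ≤ κ ∧ ∃ 𝒱 : Set (Set X),
    (∀ V ∈ 𝒱, IsOpen V) ∧ #𝒱 ≤ κ ∧ (⋂ V ∈ 𝒱, closure V) = {x}}

/-- The weak closed pseudocharacter of a space. -/
noncomputable def wPsiC (X : Type u) [TopologicalSpace X] : Cardinal.{u} :=
  ⨆ x : X, wPsiCPoint X x

/-- The pseudocharacter of a space: the least infinite cardinal κ such that every
point is the intersection of at most κ open sets. -/
noncomputable def psi (X : Type u) [TopologicalSpace X] : Cardinal.{u} :=
  sInf {κ : Cardinal.{u} | ℵ₀ ≤ κ ∧ ∀ x : X, ∃ 𝒱 : Set (Set X),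
    (∀ V ∈ 𝒱, IsOpen V) ∧ #𝒱 ≤ κ ∧ ⋂₀ 𝒱 = {x}}

/-- The Lindelöf degree of a space. -/
noncomputable def lindelofDegree (X : Type u) [TopologicalSpace X] : Cardinal.{u} :=
  sInf {κ : Cardinal.{u} | ℵ₀ ≤ κ ∧ ∀ 𝒰 : Set (Set X), (∀ U ∈ 𝒰, IsOpen U) →
    ⋃₀ 𝒰 = Set.univ → ∃ 𝒱 ⊆ 𝒰, #𝒱 ≤ κ ∧ ⋃₀ 𝒱 = Set.univ}

/-- The cardinality of the collection of regular open subsets of a space. -/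
noncomputable def cardRO (X : Type u) [TopologicalSpace X] : Cardinal.{u} :=
  #{R : Set X | R = interior (closure R)}

/-- A space is quasiregular if every nonempty open set contains a nonempty open
set whose closure is contained in it. -/
def Quasiregular (X : Type u) [TopologicalSpace X] : Prop :=
  ∀ U : Set X, IsOpen U → U.Nonempty →
    ∃ V : Set X, IsOpen V ∧ V.Nonempty ∧ closure V ⊆ U

/-!
Put `κ = c(X) · ψ_c(X)` and `μ = πχ(X) ^ κ`, so that `μ ^ κ = μ`, and fix local π-bases `𝒰 x`
of size `≤ πχ(X)` and families `𝒱 x` witnessing `ψ_c(X) ≤ κ`. Closing off, there is `H ⊆ X`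
with `|H| ≤ μ` such that for every family `𝔄` of at most `κ` families of at most `κ` members of
`⋃_{y ∈ H} 𝒰 y`, if `F = ⋃_{𝒞 ∈ 𝔄} cl (⋃ 𝒞)` is not all of `X` then `H ⊄ F`.
If some `q ∉ H`, then for each `V ∈ 𝒱 q` the members of the `𝒰 y`, `y ∈ H`, that miss `cl V`
have, since `c(X) ≤ κ`, a subfamily of size `≤ κ` with the same closure of the union. These
closures cover `H`, because every `y ∈ H` lies outside some `cl V`, but not `q`, because `V` is a
neighbourhood of `q` that they miss. This contradicts the choice of `H`, so `X = H`.
-/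

namespace Cardinal

theorem mk_iUnion_le_of_le {α ι : Type u} {μ : Cardinal.{u}} (hμ : ℵ₀ ≤ μ) (f : ι → Set α)
    (hι : #ι ≤ μ) (hf : ∀ i, #(f i) ≤ μ) : #(⋃ i, f i) ≤ μ :=
  (mk_iUnion_le f).trans (mul_le_of_le hμ hι (ciSup_le' hf))

theorem mk_bounded_subset_le_of_power_eq {α : Type u} {s : Set α} {κ μ : Cardinal.{u}}
    (hμ : ℵ₀ ≤ μ) (hμκ : μ ^ κ = μ) (hs : #s ≤ μ) :
    #{t : Set α // t ⊆ s ∧ #t ≤ κ} ≤ μ :=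
  (mk_bounded_subset_le s κ).trans (hμκ ▸ power_le_power_right (max_le hs hμ))

theorem exists_forall_lt_toType_succ_ord {κ : Cardinal.{u}} (hκ : ℵ₀ ≤ κ) {ι : Type u}
    (f : ι → (Order.succ κ).ord.ToType) (hι : #ι ≤ κ) : ∃ w, ∀ i, f i < w := by
  have hcof : Order.cof (Order.succ κ).ord.ToType = Order.succ κ := by
    rw [Ordinal.cof_toType, (isRegular_succ hκ).cof_ord]
  have hf : ¬ IsCofinal (range f) := fun hf =>
    (hcof ▸ Order.cof_le hf).not_gt ((mk_range_le.trans hι).trans_lt (Order.lt_succ κ))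
  simp only [IsCofinal, not_forall, not_exists, not_and, not_le, forall_mem_range] at hf
  exact hf

/-- Iterate `Φ` along `κ⁺`: by regularity of `κ⁺`, every subset of size `≤ κ` of the union
already lies in an earlier stage. -/
theorem exists_mk_le_forall_small_subset {α : Type u} {κ μ : Cardinal.{u}} (hκ : ℵ₀ ≤ κ)
    (hκμ : κ < μ) (hμκ : μ ^ κ = μ) (Φ : Set α → Set α) (hΦ : ∀ S : Set α, #S ≤ κ → #(Φ S) ≤ μ) :
    ∃ H : Set α, #H ≤ μ ∧ ∀ S ⊆ H, #S ≤ κ → Φ S ⊆ H := by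
  let W := (Order.succ κ).ord.ToType
  have hμ : ℵ₀ ≤ μ := hκ.trans hκμ.le
  have hW : #W ≤ μ := (mk_ord_toType _).trans_le (Order.succ_le_of_lt hκμ)
  let stage : W → Set α := wellFounded_lt.fix fun w IH =>
    ⋃ S : {S : Set α // S ⊆ ⋃ v : Iio w, IH v v.2 ∧ #S ≤ κ}, Φ S
  have stage_eq (w : W) :
      stage w = ⋃ S : {S : Set α // S ⊆ ⋃ v : Iio w, stage v ∧ #S ≤ κ}, Φ S :=
    wellFounded_lt.fix_eq _ w
  have mk_stage (w : W) : #(stage w) ≤ μ := by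
    induction w using WellFoundedLT.induction with
    | _ w IH =>
      rw [stage_eq]
      refine mk_iUnion_le_of_le hμ _ (mk_bounded_subset_le_of_power_eq hμ hμκ ?_)
        fun S => hΦ S S.2.2
      exact mk_iUnion_le_of_le hμ _ ((mk_set_le _).trans hW) fun v => IH v v.2
  refine ⟨⋃ w, stage w, mk_iUnion_le_of_le hμ _ hW mk_stage, fun S hS hSκ => ?_⟩
  choose f hf using fun s : S => mem_iUnion.1 (hS s.2)
  obtain ⟨w, hw⟩ := exists_forall_lt_toType_succ_ord hκ f hSκ
  have hSw : S ⊆ ⋃ v : Iio w, stage v := fun s hs =>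
    mem_iUnion.2 ⟨⟨f ⟨s, hs⟩, hw _⟩, hf ⟨s, hs⟩⟩
  exact ((subset_iUnion (fun S : {S : Set α // S ⊆ ⋃ v : Iio w, stage v ∧ #S ≤ κ} => Φ S)
    ⟨S, hSw, hSκ⟩).trans (stage_eq w).ge).trans (subset_iUnion stage w)

end Cardinal

theorem Set.exists_pairwiseDisjoint_subset_forall_inter_nonempty {α : Type u} (𝒪 : Set (Set α)) :
    ∃ 𝒟 ⊆ 𝒪, 𝒟.PairwiseDisjoint id ∧ ∀ O ∈ 𝒪, O.Nonempty → ∃ D ∈ 𝒟, (O ∩ D).Nonempty := by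
  obtain ⟨𝒟, h𝒟⟩ : ∃ 𝒟, Maximal (fun 𝒟 => 𝒟 ⊆ 𝒪 ∧ 𝒟.PairwiseDisjoint id) 𝒟 := by
    refine zorn_subset _ fun c hc hchain => ⟨⋃₀ c, ⟨sUnion_subset fun 𝒟 h𝒟 => (hc h𝒟).1,
      (pairwiseDisjoint_sUnion hchain.directedOn).2 fun 𝒟 h𝒟 => (hc h𝒟).2⟩,
      fun _ => subset_sUnion_of_mem⟩
  refine ⟨𝒟, h𝒟.prop.1, h𝒟.prop.2, fun O hO hOne => ?_⟩
  by_contra! hdisj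
  have hins : insert O 𝒟 ⊆ 𝒪 ∧ (insert O 𝒟).PairwiseDisjoint id :=
    ⟨insert_subset hO h𝒟.prop.1, h𝒟.prop.2.insert fun D hD _ =>
      disjoint_iff_inter_eq_empty.2 (hdisj D hD)⟩
  have hO𝒟 : O ∈ 𝒟 := h𝒟.eq_of_subset hins (subset_insert O 𝒟) ▸ mem_insert O 𝒟
  exact hOne.ne_empty (inter_self O ▸ hdisj O hO𝒟)

theorem Set.exists_subset_mk_le_subset_biUnion {α β : Type u} {f : α → Set β} {H : Set α}
    {t : Set β} (ht : t ⊆ ⋃ y ∈ H, f y) : ∃ S ⊆ H, #S ≤ #t ∧ t ⊆ ⋃ y ∈ S, f y := by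
  choose g hgH hg using fun b : t => mem_iUnion₂.1 (ht b.2)
  exact ⟨range g, range_subset_iff.2 hgH, mk_range_le,
    fun b hb => mem_iUnion₂.2 ⟨g ⟨b, hb⟩, mem_range_self _, hg ⟨b, hb⟩⟩⟩

section Topology

variable {X : Type u} [TopologicalSpace X]

/-- A maximal disjoint family of nonempty open sets, each inside a member of `𝒢`, is dense in
`⋃₀ 𝒢`; choosing one such member for each set of the family gives `𝒢'`. -/
theorem exists_subset_mk_le_sUnion_subset_closure {κ : Cardinal.{u}}
    (hcell : ∀ 𝒞 : Set (Set X), (∀ U ∈ 𝒞, IsOpen U ∧ U.Nonempty) → 𝒞.PairwiseDisjoint id →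
      #𝒞 ≤ κ)
    {𝒢 : Set (Set X)} (h𝒢 : ∀ G ∈ 𝒢, IsOpen G) :
    ∃ 𝒢' ⊆ 𝒢, #𝒢' ≤ κ ∧ ⋃₀ 𝒢 ⊆ closure (⋃₀ 𝒢') := by
  obtain ⟨𝒟, h𝒟, hdisj, hmax⟩ := exists_pairwiseDisjoint_subset_forall_inter_nonempty
    {D : Set X | IsOpen D ∧ D.Nonempty ∧ ∃ G ∈ 𝒢, D ⊆ G}
  choose! g hg𝒢 hDg using fun D (hD : D ∈ 𝒟) => (h𝒟 hD).2.2
  refine ⟨g '' 𝒟, image_subset_iff.2 hg𝒢,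
    mk_image_le.trans (hcell 𝒟 (fun D hD => ⟨(h𝒟 hD).1, (h𝒟 hD).2.1⟩) hdisj), ?_⟩
  rintro x ⟨G, hG, hxG⟩
  refine mem_closure_iff.2 fun O hO hxO => ?_
  obtain ⟨D, hD, z, ⟨hzO, -⟩, hzD⟩ :=
    hmax (O ∩ G) ⟨hO.inter (h𝒢 G hG), ⟨x, hxO, hxG⟩, G, hG, inter_subset_right⟩ ⟨x, hxO, hxG⟩
  exact ⟨z, hzO, g D, mem_image_of_mem g hD, hDg D hD hzD⟩

theorem IsLocalPiBase.mem_closure_sUnion {x : X} {𝒰 : Set (Set X)} (h𝒰 : IsLocalPiBase X x 𝒰)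
    {W : Set X} (hW : IsOpen W) (hxW : x ∈ W) : x ∈ closure (⋃₀ {U ∈ 𝒰 | U ⊆ W}) := by
  refine mem_closure_iff.2 fun O hO hxO => ?_
  obtain ⟨U, hU, hUOW⟩ := h𝒰.2 (O ∩ W) (hO.inter hW) ⟨hxO, hxW⟩
  obtain ⟨z, hz⟩ := (h𝒰.1 U hU).2
  exact ⟨z, (hUOW hz).1, U, ⟨hU, hUOW.trans inter_subset_right⟩, hz⟩

def closureSUnions (𝔄 : Set (Set (Set X))) : Set X :=
  ⋃ 𝒞 ∈ 𝔄, closure (⋃₀ 𝒞)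

def escapePoints (κ : Cardinal.{u}) (𝒰 : X → Set (Set X)) (S : Set X) : Set X :=
  range fun 𝔄 : {𝔄 : Set (Set (Set X)) // 𝔄 ⊆ {𝒞 | 𝒞 ⊆ ⋃ y ∈ S, 𝒰 y ∧ #𝒞 ≤ κ} ∧ #𝔄 ≤ κ ∧
    (closureSUnions 𝔄)ᶜ.Nonempty} => 𝔄.2.2.2.some

theorem mk_escapePoints_le {κ μ : Cardinal.{u}} (hμ : ℵ₀ ≤ μ) (hμκ : μ ^ κ = μ)
    {𝒰 : X → Set (Set X)} (h𝒰 : ∀ y, #(𝒰 y) ≤ μ) {S : Set X} (hS : #S ≤ μ) :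
    #(escapePoints κ 𝒰 S) ≤ μ := by
  have h𝒰S : #(⋃ y ∈ S, 𝒰 y) ≤ μ := by
    rw [biUnion_eq_iUnion]
    exact mk_iUnion_le_of_le hμ _ hS fun y => h𝒰 y
  exact mk_range_le.trans <| (mk_subtype_mono fun 𝔄 h => ⟨h.1, h.2.1⟩).trans <|
    mk_bounded_subset_le_of_power_eq hμ hμκ (mk_bounded_subset_le_of_power_eq hμ hμκ h𝒰S)

theorem eq_univ_of_escapePoints_subset {κ : Cardinal.{u}} (hκ : ℵ₀ ≤ κ)
    {𝒰 : X → Set (Set X)} (h𝒰 : ∀ x, IsLocalPiBase X x (𝒰 x))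
    (hψ : ∀ x : X, ∃ 𝒱 : Set (Set X),
      (∀ V ∈ 𝒱, IsOpen V ∧ x ∈ V) ∧ #𝒱 ≤ κ ∧ (⋂ V ∈ 𝒱, closure V) = {x})
    (hcell : ∀ 𝒞 : Set (Set X), (∀ U ∈ 𝒞, IsOpen U ∧ U.Nonempty) → 𝒞.PairwiseDisjoint id →
      #𝒞 ≤ κ)
    {H : Set X} (hH : ∀ S ⊆ H, #S ≤ κ → escapePoints κ 𝒰 S ⊆ H) : H = Set.univ := by
  refine eq_univ_of_forall fun q => ?_
  by_contra hqH
  obtain ⟨𝒱, h𝒱, h𝒱κ, h𝒱q⟩ := hψ q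
  have hrefine (V : Set X) := exists_subset_mk_le_sUnion_subset_closure hcell
    (𝒢 := {U ∈ ⋃ y ∈ H, 𝒰 y | U ⊆ (closure V)ᶜ}) fun U ⟨hU, _⟩ => by
      obtain ⟨y, -, hUy⟩ := mem_iUnion₂.1 hU
      exact ((h𝒰 y).1 U hUy).1
  choose 𝒢 h𝒢 h𝒢κ h𝒢dense using hrefine
  obtain ⟨S, hSH, hSκ, hS⟩ := exists_subset_mk_le_subset_biUnion (t := ⋃ V ∈ 𝒱, 𝒢 V)
    (iUnion₂_subset fun V _ U hU => (h𝒢 V hU).1)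
  have hSκ' : #S ≤ κ := hSκ.trans <| by
    rw [biUnion_eq_iUnion]
    exact mk_iUnion_le_of_le hκ _ h𝒱κ fun V => h𝒢κ V
  have hq : q ∉ closureSUnions (𝒢 '' 𝒱) := by
    simp only [closureSUnions, mem_iUnion₂, mem_image, exists_prop]
    rintro ⟨_, ⟨V, hV, rfl⟩, hqV⟩
    have hV𝒢 : Disjoint V (⋃₀ 𝒢 V) := disjoint_sUnion_right.2 fun U hU =>
      disjoint_right.2 fun z hzU hzV => (h𝒢 V hU).2 hzU (subset_closure hzV)
    exact disjoint_left.1 (hV𝒢.closure_right (h𝒱 V hV).1) (h𝒱 V hV).2 hqV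
  have hH𝒢 : H ⊆ closureSUnions (𝒢 '' 𝒱) := by
    intro y hy
    obtain ⟨V, hV, hyV⟩ : ∃ V ∈ 𝒱, y ∉ closure V := by
      have : y ∉ ⋂ V ∈ 𝒱, closure V := h𝒱q ▸ fun hyq => hqH (mem_singleton_iff.1 hyq ▸ hy)
      simpa using this
    have hy𝒢 := (h𝒰 y).mem_closure_sUnion isClosed_closure.isOpen_compl hyV
    refine mem_iUnion₂.2 ⟨𝒢 V, mem_image_of_mem 𝒢 hV,
      closure_minimal (h𝒢dense V) isClosed_closure ?_⟩
    refine closure_mono (sUnion_mono ?_) hy𝒢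
    exact fun U hU => ⟨mem_biUnion hy hU.1, hU.2⟩
  have hne : (closureSUnions (𝒢 '' 𝒱))ᶜ.Nonempty := ⟨q, hq⟩
  have hescape : hne.some ∈ escapePoints κ 𝒰 S :=
    mem_range.2 ⟨⟨𝒢 '' 𝒱, image_subset_iff.2 fun V hV =>
      ⟨fun U hU => hS (mem_biUnion hV hU), h𝒢κ V⟩, mk_image_le.trans h𝒱κ, hne⟩, rfl⟩
  exact hne.some_mem (hH𝒢 (hH S hSH hSκ' hescape))

theorem mk_le_power_of_piBase_psiC_cellularity_bounds {π κ : Cardinal.{u}} (hπ : 2 ≤ π)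
    (hκ : ℵ₀ ≤ κ) (hpi : ∀ x : X, ∃ 𝒰 : Set (Set X), IsLocalPiBase X x 𝒰 ∧ #𝒰 ≤ π)
    (hψ : ∀ x : X, ∃ 𝒱 : Set (Set X),
      (∀ V ∈ 𝒱, IsOpen V ∧ x ∈ V) ∧ #𝒱 ≤ κ ∧ (⋂ V ∈ 𝒱, closure V) = {x})
    (hcell : ∀ 𝒞 : Set (Set X), (∀ U ∈ 𝒞, IsOpen U ∧ U.Nonempty) → 𝒞.PairwiseDisjoint id →
      #𝒞 ≤ κ) :
    #X ≤ π ^ κ := by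
  choose 𝒰 h𝒰 h𝒰π using hpi
  have hκμ : κ < π ^ κ := (cantor κ).trans_le (power_le_power_right hπ)
  have hμ : ℵ₀ ≤ π ^ κ := hκ.trans hκμ.le
  have hμκ : (π ^ κ) ^ κ = π ^ κ := by rw [← power_mul, mul_eq_self hκ]
  have hπμ : π ≤ π ^ κ := self_le_power π (one_le_aleph0.trans hκ)
  obtain ⟨H, hHμ, hH⟩ := exists_mk_le_forall_small_subset hκ hκμ hμκ (escapePoints κ 𝒰)
    fun S hS => mk_escapePoints_le hμ hμκ (fun y => (h𝒰π y).trans hπμ) (hS.trans hκμ.le)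
  rw [← mk_univ, ← eq_univ_of_escapePoints_subset hκ h𝒰 hψ hcell hH]
  exact hHμ

end Topology

section CardinalFunctions

variable (X : Type u) [TopologicalSpace X]

theorem cellularity_spec : ℵ₀ ≤ cellularity X ∧ ∀ 𝒞 : Set (Set X),
    (∀ U ∈ 𝒞, IsOpen U ∧ U.Nonempty) → 𝒞.PairwiseDisjoint id → #𝒞 ≤ cellularity X :=
  (csInf_mem ⟨max ℵ₀ #(Set X), le_max_left _ _,
    fun 𝒞 _ _ => (mk_set_le 𝒞).trans (le_max_right _ _)⟩ : cellularity X ∈ _)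

theorem biInter_closure_isOpen_mem_eq_singleton [T2Space X] (x : X) :
    ⋂ V ∈ {V : Set X | IsOpen V ∧ x ∈ V}, closure V = {x} := by
  refine eq_singleton_iff_unique_mem.2 ⟨mem_iInter₂.2 fun V hV => subset_closure hV.2, ?_⟩
  intro z hz
  by_contra hzx
  obtain ⟨U, V, hU, hV, hxU, hzV, hUV⟩ := t2_separation (Ne.symm hzx)
  exact disjoint_left.1 (hUV.closure_left hV) (mem_iInter₂.1 hz U ⟨hU, hxU⟩) hzV

theorem psiC_spec [T2Space X] : ℵ₀ ≤ psiC X ∧ ∀ x : X, ∃ 𝒱 : Set (Set X),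
    (∀ V ∈ 𝒱, IsOpen V ∧ x ∈ V) ∧ #𝒱 ≤ psiC X ∧ (⋂ V ∈ 𝒱, closure V) = {x} :=
  (csInf_mem ⟨max ℵ₀ #(Set X), le_max_left _ _, fun x => ⟨{V | IsOpen V ∧ x ∈ V}, fun _ hV => hV,
    (mk_set_le _).trans (le_max_right _ _), biInter_closure_isOpen_mem_eq_singleton X x⟩⟩ :
    psiC X ∈ _)

theorem piCharPoint_spec (x : X) : ℵ₀ ≤ piCharPoint X x ∧
    ∃ 𝒰 : Set (Set X), IsLocalPiBase X x 𝒰 ∧ #𝒰 ≤ piCharPoint X x :=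
  (csInf_mem ⟨max ℵ₀ #(Set X), le_max_left _ _, {U | IsOpen U ∧ U.Nonempty},
    ⟨fun _ hU => hU, fun U hU hxU => ⟨U, ⟨hU, x, hxU⟩, subset_rfl⟩⟩,
    (mk_set_le _).trans (le_max_right _ _)⟩ : piCharPoint X x ∈ _)

theorem piCharPoint_le_piChar (x : X) : piCharPoint X x ≤ piChar X :=
  le_ciSup bddAbove_of_small x

theorem aleph0_le_piChar [Nonempty X] : ℵ₀ ≤ piChar X :=
  (piCharPoint_spec X (Classical.arbitrary X)).1.trans (piCharPoint_le_piChar X _)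

theorem exists_isLocalPiBase_mk_le_piChar (x : X) :
    ∃ 𝒰 : Set (Set X), IsLocalPiBase X x 𝒰 ∧ #𝒰 ≤ piChar X :=
  (piCharPoint_spec X x).2.imp fun _ h => ⟨h.1, h.2.trans (piCharPoint_le_piChar X x)⟩

end CardinalFunctions

/-- Sun: If `X` is Hausdorff then `|X| ≤ πχ(X)^(c(X)·ψ_c(X))`. -/
theorem stmt_14 (X : Type u) [TopologicalSpace X] [T2Space X] :
    #X ≤ piChar X ^ (cellularity X * psiC X) := by
  rcases isEmpty_or_nonempty X with hX | hX
  · simp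
  obtain ⟨hc, hcell⟩ := cellularity_spec X
  obtain ⟨hψ, hpsi⟩ := psiC_spec X
  have hcκ : cellularity X ≤ cellularity X * psiC X :=
    le_mul_of_one_le_right' (one_le_aleph0.trans hψ)
  have hψκ : psiC X ≤ cellularity X * psiC X := le_mul_of_one_le_left' (one_le_aleph0.trans hc)
  exact mk_le_power_of_piBase_psiC_cellularity_bounds
    (natCast_lt_aleph0.le.trans (aleph0_le_piChar X)) (hc.trans hcκ)
    (exists_isLocalPiBase_mk_le_piChar X)
    (fun x => (hpsi x).imp fun _ h => ⟨h.1, h.2.1.trans hψκ, h.2.2⟩)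
    (fun 𝒞 hopen hdisj => (hcell 𝒞 hopen hdisj).trans hcκ)
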